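/- Every braid β ∈ B_n admits a unique decomposition β = Δ_n^{−t} β', where t is a nonnegative integer and β' is an element of B⁺_n which, unless t = 0, is not left divisible by Δ_n. -/

import Mathlib

/-!
The identity `Δ_n σ_i = σ_{n-i} Δ_n` shows that conjugation by `Δ_n` preserves `B⁺_n`; together
with the fact that every `σ_i` right-divides `Δ_n`, this lets one push powers of `Δ_n` leftwards
through a word in the `σ_i^{±1}`, so `Δ_n^t β ∈ B⁺_n` for some `t`. Since `Δ_n ∈ B⁺_n`, the set of
such `t` is upward closed: the decomposition is `β = Δ_n^{-t} (Δ_n^t β)` for the least such `t`,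
and for any larger `t` the positive part is still left divisible by `Δ_n`.
-/

namespace Braid

/-- Defining relations of the braid group, with generators indexed by `Fin m`
(the index `i : Fin m` stands for the Artin generator `σ_{i+1}`). -/
def braidRels (m : ℕ) : Set (FreeGroup (Fin m)) :=
  {r | ∃ i j : Fin m,
      ((i : ℕ) + 2 ≤ (j : ℕ) ∧
        r = FreeGroup.of i * FreeGroup.of j * (FreeGroup.of i)⁻¹ * (FreeGroup.of j)⁻¹) ∨
      ((j : ℕ) = (i : ℕ) + 1 ∧
        r = FreeGroup.of i * FreeGroup.of j * FreeGroup.of i *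
            (FreeGroup.of j)⁻¹ * (FreeGroup.of i)⁻¹ * (FreeGroup.of j)⁻¹)}

/-- The braid group `B_n` on `n` strands, presented by the Artin generators
`σ_1, …, σ_{n-1}` and the braid relations. -/
abbrev B (n : ℕ) : Type := PresentedGroup (braidRels (n - 1))

/-- The Artin generator `σ_i` of `B n`, for `1 ≤ i ≤ n-1` (junk value `1` otherwise). -/
def gen (n i : ℕ) : B n :=
  if h : i - 1 < n - 1 then PresentedGroup.of (⟨i - 1, h⟩ : Fin (n - 1)) else 1

/-- The positive braid monoid `B⁺_k` inside `B n`: the submonoid generated by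
`σ_1, …, σ_{k-1}`. -/
def Bplus (n k : ℕ) : Submonoid (B n) :=
  Submonoid.closure {x | ∃ i, 1 ≤ i ∧ i + 1 ≤ k ∧ x = gen n i}

/-- The subgroup `B_k` of `B n`, generated by `σ_1, …, σ_{k-1}`. -/
def Bsub (n k : ℕ) : Subgroup (B n) :=
  Subgroup.closure {x | ∃ i, 1 ≤ i ∧ i + 1 ≤ k ∧ x = gen n i}

/-- `β` left-divides `γ` (with respect to the positive monoid `B⁺_n`). -/
def LDiv (n : ℕ) (β γ : B n) : Prop := β⁻¹ * γ ∈ Bplus n n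

/-- `β` right-divides `γ` (with respect to the positive monoid `B⁺_n`). -/
def RDiv (n : ℕ) (β γ : B n) : Prop := γ * β⁻¹ ∈ Bplus n n

/-- The Garside element `Δ_k = (σ_1⋯σ_{k-1})(σ_1⋯σ_{k-2})⋯(σ_1σ_2)σ_1` of `B⁺_k`,
viewed inside `B n`. -/
def delta (n k : ℕ) : B n :=
  ((List.range (k - 1)).reverse.map
    (fun j => ((List.range' 1 (j + 1)).map (gen n)).prod)).prod

/-- The `k`-th power of the flip automorphism `φ_n` of `B n`:
conjugation by `Δ_n^k`. -/
def flip (n k : ℕ) (x : B n) : B n := delta n n ^ k * x * (delta n n ^ k)⁻¹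

/-- The set `φ_n^k(B⁺_{n-1})` inside `B n`. -/
def flipSet (n k : ℕ) : Set (B n) := flip n k '' (Bplus n (n - 1) : Set (B n))

/-- `δ` is the maximal right divisor of `β` lying in the set `X`:
`δ ∈ X`, `δ` right-divides `β`, and every right divisor of `β` lying in `X`
right-divides `δ`. -/
def IsMaxRDivIn (n : ℕ) (X : Set (B n)) (β δ : B n) : Prop :=
  δ ∈ X ∧ RDiv n δ β ∧ ∀ γ ∈ X, RDiv n γ β → RDiv n γ δ

/-- The product `φ_n^{d-1}(b d) ⋯ φ_n^{k-1}(b k)` (factors in decreasing order of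
the index, from `d` down to `k`). -/
def tailProd (n : ℕ) (b : ℕ → B n) (k d : ℕ) : B n :=
  ((List.range' k (d + 1 - k)).reverse.map (fun l => flip n (l - 1) (b l))).prod

/-- `(b d, …, b 1)` is the `φ_n`-splitting of `β`: each `b k` lies in `B⁺_{n-1}`,
`b d ≠ 1`, `β = φ_n^{d-1}(b d) ⋯ φ_n(b 2) (b 1)`, and for each `k`, the element
`φ_n^{k-1}(b k)` is the maximal right divisor of `φ_n^{d-1}(b d) ⋯ φ_n^{k-1}(b k)`
lying in `φ_n^{k-1}(B⁺_{n-1})`. -/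
def IsSplitting (n d : ℕ) (b : ℕ → B n) (β : B n) : Prop :=
  1 ≤ d ∧ (∀ k, 1 ≤ k → k ≤ d → b k ∈ Bplus n (n - 1)) ∧ b d ≠ 1 ∧
  β = tailProd n b 1 d ∧
  ∀ k, 1 ≤ k → k ≤ d →
    IsMaxRDivIn n (flipSet n (k - 1)) (tailProd n b k d) (flip n (k - 1) (b k))

/-- Evaluation of a word over the letters `σ_i^{±1}` in `B n`: the letter `(i, true)`
stands for `σ_i` and `(i, false)` for `σ_i⁻¹`. -/
def evalWord (n : ℕ) (w : List (ℕ × Bool)) : B n :=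
  (w.map (fun p => if p.2 then gen n p.1 else (gen n p.1)⁻¹)).prod

/-- A word over the letters `σ_j^{±1}` is `σ_i`-positive: it contains at least one
letter `σ_i`, no letter `σ_i⁻¹` and no letter `σ_j^{±1}` with `j > i`. -/
def SigmaPos (i : ℕ) (w : List (ℕ × Bool)) : Prop :=
  (i, true) ∈ w ∧ (i, false) ∉ w ∧ ∀ p ∈ w, 1 ≤ p.1 ∧ p.1 ≤ i

/-- A word over the letters `σ_j^{±1}` is `σ_i`-negative: it contains at least one
letter `σ_i⁻¹`, no letter `σ_i` and no letter `σ_j^{±1}` with `j > i`. -/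
def SigmaNeg (i : ℕ) (w : List (ℕ × Bool)) : Prop :=
  (i, false) ∈ w ∧ (i, true) ∉ w ∧ ∀ p ∈ w, 1 ≤ p.1 ∧ p.1 ≤ i

/-- The Dehornoy ordering on `B n`: `β < γ` iff `β⁻¹γ` is represented by a
`σ_i`-positive word for some `i ≤ n-1`. -/
def dlt (n : ℕ) (β γ : B n) : Prop :=
  ∃ i w, i + 1 ≤ n ∧ SigmaPos i w ∧ evalWord n w = β⁻¹ * γ

/-- The nonstrict Dehornoy ordering. -/
def dle (n : ℕ) (β γ : B n) : Prop := dlt n β γ ∨ β = γ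

/-- The minimal length of a word over `σ_1^{±1}, …, σ_{n-1}^{±1}` representing `β`. -/
noncomputable def normSigma (n : ℕ) (β : B n) : ℕ :=
  sInf {l | ∃ w : List (ℕ × Bool), (∀ p ∈ w, 1 ≤ p.1 ∧ p.1 ≤ n - 1) ∧
    evalWord n w = β ∧ w.length = l}

/-- The (common) length of the positive words over `σ_1, …, σ_{n-1}` representing a
positive braid `β`. -/
noncomputable def posLen (n : ℕ) (β : B n) : ℕ :=
  sInf {l | ∃ w : List (ℕ × Bool), (∀ p ∈ w, 1 ≤ p.1 ∧ p.1 ≤ n - 1 ∧ p.2 = true) ∧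
    evalWord n w = β ∧ w.length = l}

/-- The Birman–Ko–Lee generator `a_{p,q} = σ_p ⋯ σ_{q-2} σ_{q-1} σ_{q-2}⁻¹ ⋯ σ_p⁻¹`
of `B n`. -/
def bkl (n p q : ℕ) : B n :=
  ((List.range' p (q - 1 - p)).map (gen n)).prod * gen n (q - 1) *
    (((List.range' p (q - 1 - p)).map (gen n)).prod)⁻¹

/-- The dual braid monoid `B⁺*_n`: the submonoid of `B n` generated by the
Birman–Ko–Lee generators. -/
def DualBplus (n : ℕ) : Submonoid (B n) :=
  Submonoid.closure {x | ∃ p q, 1 ≤ p ∧ p < q ∧ q ≤ n ∧ x = bkl n p q}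

/-- Evaluation in `B n` of a word over the letters `a_{p,q}^{±1}`. -/
def evalDual (n : ℕ) (w : List ((ℕ × ℕ) × Bool)) : B n :=
  (w.map (fun l => if l.2 then bkl n l.1.1 l.1.2 else (bkl n l.1.1 l.1.2)⁻¹)).prod

/-- The minimal length of a word over the letters `a_{p,q}^{±1}` (`1 ≤ p < q ≤ n`)
representing `β`. -/
noncomputable def normDual (n : ℕ) (β : B n) : ℕ :=
  sInf {l | ∃ w : List ((ℕ × ℕ) × Bool),
    (∀ p ∈ w, 1 ≤ p.1.1 ∧ p.1.1 < p.1.2 ∧ p.1.2 ≤ n) ∧ evalDual n w = β ∧ w.length = l}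

end Braid

section GarsideQuotient

variable {G : Type*} [Group G]

theorem Submonoid.mul_mul_inv_mem_closure {S : Set G} {d : G}
    (hconj : ∀ s ∈ S, d * s * d⁻¹ ∈ Submonoid.closure S) {x : G}
    (hx : x ∈ Submonoid.closure S) : d * x * d⁻¹ ∈ Submonoid.closure S := by
  induction hx using Submonoid.closure_induction with
  | mem s hs => exact hconj s hs
  | one => simp
  | mul x y _ _ hx hy => simpa [mul_assoc] using mul_mem hx hy

theorem Submonoid.pow_mul_mul_inv_mem_closure {S : Set G} {d : G}
    (hconj : ∀ s ∈ S, d * s * d⁻¹ ∈ Submonoid.closure S) (t : ℕ) {x : G}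
    (hx : x ∈ Submonoid.closure S) : d ^ t * x * (d ^ t)⁻¹ ∈ Submonoid.closure S := by
  induction t with
  | zero => simpa using hx
  | succ t ih =>
    simpa [pow_succ', mul_assoc] using Submonoid.mul_mul_inv_mem_closure hconj ih

theorem Submonoid.exists_pow_mul_mem_closure {S : Set G} {d : G}
    (hconj : ∀ s ∈ S, d * s * d⁻¹ ∈ Submonoid.closure S)
    (hinv : ∀ s ∈ S, d * s⁻¹ ∈ Submonoid.closure S) {g : G} (hg : g ∈ Subgroup.closure S) :
    ∃ t : ℕ, d ^ t * g ∈ Submonoid.closure S := by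
  induction hg using Subgroup.closure_induction'' with
  | mem s hs => exact ⟨0, by simpa using Submonoid.subset_closure hs⟩
  | inv_mem s hs => exact ⟨1, by simpa using hinv s hs⟩
  | one => exact ⟨0, by simp⟩
  | mul x y _ _ hx hy =>
    obtain ⟨a, ha⟩ := hx
    obtain ⟨b, hb⟩ := hy
    refine ⟨b + a, ?_⟩
    have key : d ^ (b + a) * (x * y) = d ^ b * (d ^ a * x) * (d ^ b)⁻¹ * (d ^ b * y) := by
      rw [pow_add]; group
    rw [key]
    exact mul_mem (Submonoid.pow_mul_mul_inv_mem_closure hconj b ha) hb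

theorem Submonoid.existsUnique_pow_inv_mul {P : Submonoid G} {d : G} (hd : d ∈ P) {g : G}
    (hg : ∃ t : ℕ, d ^ t * g ∈ P) :
    ∃! p : ℕ × G, p.2 ∈ P ∧ g = (d ^ p.1)⁻¹ * p.2 ∧ (p.1 ≠ 0 → d⁻¹ * p.2 ∉ P) := by
  classical
  have mono {a b : ℕ} (hab : a ≤ b) (ha : d ^ a * g ∈ P) : d ^ b * g ∈ P := by
    have hb : d ^ b * g = d ^ (b - a) * (d ^ a * g) := by
      rw [← mul_assoc, ← pow_add, Nat.sub_add_cancel hab]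
    exact hb ▸ mul_mem (pow_mem hd _) ha
  have inv_mul {s : ℕ} (hs : s ≠ 0) : d⁻¹ * (d ^ s * g) = d ^ (s - 1) * g := by
    conv_lhs => rw [← Nat.sub_add_cancel (Nat.one_le_iff_ne_zero.mpr hs), pow_succ']
    group
  refine ⟨(Nat.find hg, d ^ Nat.find hg * g), ⟨Nat.find_spec hg, by group, fun h0 h => ?_⟩, ?_⟩
  · exact Nat.find_min hg (by omega) (inv_mul h0 ▸ h)
  rintro ⟨s, y⟩ ⟨hy, hgy, hmin⟩
  obtain rfl : y = d ^ s * g := by rw [hgy]; group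
  obtain rfl : s = Nat.find hg := by
    refine le_antisymm (not_lt.mp fun hlt => hmin (by omega) ?_) (Nat.find_min' hg hy)
    rw [inv_mul (by omega)]
    exact mono (by omega) (Nat.find_spec hg)
  rfl

end GarsideQuotient

namespace Braid

theorem gen_eq_of {n i : ℕ} (h : i - 1 < n - 1) : gen n i = PresentedGroup.of ⟨i - 1, h⟩ :=
  dif_pos h

theorem gen_eq_one {n i : ℕ} (h : n - 1 ≤ i - 1) : gen n i = 1 :=
  dif_neg (by omega)

theorem gen_commute {n i j : ℕ} (hi : 1 ≤ i) (hij : i + 2 ≤ j) : Commute (gen n i) (gen n j) := by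
  by_cases hj : j - 1 < n - 1
  · have hr := PresentedGroup.one_of_mem (rels := braidRels (n - 1))
      ⟨⟨i - 1, by omega⟩, ⟨j - 1, hj⟩, Or.inl ⟨by simp only; omega, rfl⟩⟩
    rw [gen_eq_of hj, gen_eq_of (by omega)]
    exact commutatorElement_eq_one_iff_commute.mp hr
  · rw [gen_eq_one (i := j) (by omega)]
    exact Commute.one_right _

theorem gen_braid {n i : ℕ} (hi : 1 ≤ i) (hin : i + 1 < n) :
    gen n i * gen n (i + 1) * gen n i = gen n (i + 1) * gen n i * gen n (i + 1) := by
  have hr := PresentedGroup.one_of_mem (rels := braidRels (n - 1))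
    ⟨⟨i - 1, by omega⟩, ⟨i + 1 - 1, by omega⟩, Or.inr ⟨by simp only; omega, rfl⟩⟩
  rw [gen_eq_of (by omega), gen_eq_of (by omega)]
  simp only [map_mul, map_inv] at hr
  rwa [mul_inv_eq_one, mul_inv_eq_iff_eq_mul, mul_inv_eq_iff_eq_mul] at hr

theorem gen_mem_Bplus (n i : ℕ) : gen n i ∈ Bplus n n := by
  by_cases h : i - 1 < n - 1
  · apply Submonoid.subset_closure
    refine ⟨i - 1 + 1, by omega, by omega, ?_⟩
    rw [gen_eq_of h, gen_eq_of (by omega)]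
    rfl
  · rw [gen_eq_one (by omega)]
    exact one_mem _

theorem closure_gen_eq_top (n : ℕ) :
    Subgroup.closure {x : B n | ∃ i, 1 ≤ i ∧ i + 1 ≤ n ∧ x = gen n i} = ⊤ := by
  refine eq_top_mono (Subgroup.closure_mono ?_)
    (PresentedGroup.closure_range_of (braidRels (n - 1)))
  rintro _ ⟨a, rfl⟩
  exact ⟨a + 1, by omega, by omega, (gen_eq_of (i := a + 1) (by omega)).symm⟩

def ascProd (n k : ℕ) : B n := ((List.range' 1 k).map (gen n)).prod

def descProd (n : ℕ) : ℕ → B n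
  | 0 => 1
  | k + 1 => gen n (k + 1) * descProd n k

theorem ascProd_succ (n k : ℕ) : ascProd n (k + 1) = ascProd n k * gen n (k + 1) := by
  simp [ascProd, List.range'_1_concat, Nat.add_comm]

theorem delta_succ (n k : ℕ) : delta n (k + 1) = ascProd n k * delta n k := by
  cases k with
  | zero => simp [delta, ascProd]
  | succ k => simp [delta, ascProd, List.range_succ]

theorem ascProd_mem_Bplus (n k : ℕ) : ascProd n k ∈ Bplus n n :=
  Submonoid.list_prod_mem _ fun _ hx => by
    obtain ⟨i, -, rfl⟩ := List.mem_map.mp hx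
    exact gen_mem_Bplus n i

theorem delta_mem_Bplus (n k : ℕ) : delta n k ∈ Bplus n n := by
  induction k with
  | zero => exact one_mem _
  | succ k ih => simpa [delta_succ] using mul_mem (ascProd_mem_Bplus n k) ih

theorem gen_one_inv_mul_ascProd_mem_Bplus (n k : ℕ) :
    (gen n 1)⁻¹ * ascProd n (k + 1) ∈ Bplus n n := by
  induction k with
  | zero => simp [ascProd]
  | succ k ih =>
    rw [ascProd_succ, ← mul_assoc]
    exact mul_mem ih (gen_mem_Bplus n _)

theorem ascProd_commute {n k m : ℕ} (h : k + 2 ≤ m) : Commute (ascProd n k) (gen n m) := by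
  induction k with
  | zero => exact Commute.one_left _
  | succ k ih =>
    rw [ascProd_succ]
    exact (ih (by omega)).mul_left (gen_commute (by omega) h)

theorem delta_commute {n k m : ℕ} (h : k + 1 ≤ m) : Commute (delta n k) (gen n m) := by
  induction k with
  | zero => exact Commute.one_left _
  | succ k ih =>
    rw [delta_succ]
    exact (ascProd_commute h).mul_left (ih (by omega))

theorem descProd_commute {n k m : ℕ} (h : k + 2 ≤ m) : Commute (descProd n k) (gen n m) := by
  induction k with
  | zero => exact Commute.one_left _
  | succ k ih => exact (gen_commute (by omega) h).mul_left (ih (by omega))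

theorem delta_succ_eq_mul_descProd (n k : ℕ) : delta n (k + 1) = delta n k * descProd n k := by
  induction k with
  | zero => simp [delta, descProd]
  | succ k ih =>
    calc delta n (k + 2)
        = ascProd n k * (gen n (k + 1) * delta n k) * descProd n k := by
          rw [delta_succ, ascProd_succ, ih]; group
      _ = delta n (k + 1) * descProd n (k + 1) := by
          rw [(delta_commute le_rfl).symm.eq, delta_succ, descProd]; group

theorem ascProd_add_two_mul_gen {n k : ℕ} (hk : k + 2 < n) :
    ascProd n (k + 2) * gen n (k + 1) = gen n (k + 2) * ascProd n (k + 2) := by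
  calc ascProd n (k + 2) * gen n (k + 1)
      = ascProd n k * (gen n (k + 1) * gen n (k + 2) * gen n (k + 1)) := by
        rw [ascProd_succ, ascProd_succ]; group
    _ = gen n (k + 2) * ascProd n (k + 2) := by
        rw [gen_braid (by omega) hk, ascProd_succ, ascProd_succ]
        simp only [← mul_assoc, (ascProd_commute le_rfl).eq]

theorem ascProd_mul_gen {n k m : ℕ} (hm : 1 ≤ m) (hmk : m < k) (hk : k < n) :
    ascProd n k * gen n m = gen n (m + 1) * ascProd n k := by
  induction k with
  | zero => omega
  | succ k ih =>
    rcases Nat.lt_or_ge m k with hlt | hge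
    · rw [ascProd_succ, mul_assoc, ← (gen_commute hm (by omega)).eq, ← mul_assoc,
        ih hlt (by omega), mul_assoc]
    · obtain rfl : m = k := by omega
      obtain ⟨l, rfl⟩ : ∃ l, m = l + 1 := ⟨m - 1, by omega⟩
      exact ascProd_add_two_mul_gen hk

theorem descProd_add_two_mul_gen {n k : ℕ} (hk : k + 2 < n) :
    descProd n (k + 2) * gen n (k + 2) = gen n (k + 1) * descProd n (k + 2) := by
  calc descProd n (k + 2) * gen n (k + 2)
      = gen n (k + 2) * gen n (k + 1) * (descProd n k * gen n (k + 2)) := by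
        simp only [descProd]; group
    _ = gen n (k + 2) * gen n (k + 1) * gen n (k + 2) * descProd n k := by
        rw [(descProd_commute le_rfl).eq]; group
    _ = gen n (k + 1) * descProd n (k + 2) := by
        rw [← gen_braid (by omega) hk]; simp only [descProd]; group

/-- For `j < k` push `σ_j` through `Δ_{k+1} = C_k Δ_k`, for `j = k` through
`Δ_{k+1} = Δ_k D_k`, where `C_k = σ_1 ⋯ σ_k` and `D_k = σ_k ⋯ σ_1`. -/
theorem delta_mul_gen {n k j : ℕ} (hj : 1 ≤ j) (hjk : j < k) (hk : k ≤ n) :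
    delta n k * gen n j = gen n (k - j) * delta n k := by
  induction k generalizing j with
  | zero => omega
  | succ k ih =>
    rcases Nat.lt_or_ge j k with hlt | hge
    · rw [delta_succ, mul_assoc, ih hj hlt (by omega), ← mul_assoc,
        ascProd_mul_gen (by omega) (by omega) (by omega), mul_assoc,
        show k + 1 - j = k - j + 1 by omega]
    obtain rfl : j = k := by omega
    rw [Nat.add_sub_cancel_left, delta_succ_eq_mul_descProd]
    match j, hj with
    | 1, _ => simp [delta, descProd]
    | l + 2, _ =>
      have hl := ih (j := l + 1) (by omega) (by omega) (by omega)
      rw [show l + 2 - (l + 1) = 1 by omega] at hl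
      rw [mul_assoc, descProd_add_two_mul_gen (by omega), ← mul_assoc, hl, mul_assoc]

theorem delta_mul_gen_inv_mem_Bplus {n k j : ℕ} (hj : 1 ≤ j) (hjk : j < k) (hk : k ≤ n) :
    delta n k * (gen n j)⁻¹ ∈ Bplus n n := by
  induction k generalizing j with
  | zero => omega
  | succ k ih =>
    rcases Nat.lt_or_ge j k with hlt | hge
    · rw [delta_succ, mul_assoc]
      exact mul_mem (ascProd_mem_Bplus n k) (ih hj hlt (by omega))
    obtain rfl : j = k := by omega
    -- `Δ_{j+1} σ_j⁻¹ = σ_1⁻¹ Δ_{j+1}`, and `σ_1` left-divides `Δ_{j+1} = C_j Δ_j`.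
    have h := delta_mul_gen (n := n) hj hjk hk
    rw [Nat.add_sub_cancel_left] at h
    have h' : delta n (j + 1) * (gen n j)⁻¹ = (gen n 1)⁻¹ * delta n (j + 1) := by
      rw [mul_inv_eq_iff_eq_mul, mul_assoc, h, inv_mul_cancel_left]
    obtain ⟨l, rfl⟩ : ∃ l, j = l + 1 := ⟨j - 1, by omega⟩
    rw [h', delta_succ, ← mul_assoc]
    exact mul_mem (gen_one_inv_mul_ascProd_mem_Bplus n l) (delta_mem_Bplus n _)

theorem garside_quotient_exists_unique_general (n : ℕ) (β : B n) :
    ∃! p : ℕ × B n, p.2 ∈ Bplus n n ∧ β = (delta n n ^ p.1)⁻¹ * p.2 ∧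
      (p.1 ≠ 0 → ¬ LDiv n (delta n n) p.2) := by
  refine Submonoid.existsUnique_pow_inv_mul (delta_mem_Bplus n n)
    (Submonoid.exists_pow_mul_mem_closure ?conj ?inv ?gen)
  case conj =>
    rintro _ ⟨i, hi, hin, rfl⟩
    rw [delta_mul_gen hi (by omega) le_rfl, mul_inv_cancel_right]
    exact gen_mem_Bplus n _
  case inv =>
    rintro _ ⟨i, hi, hin, rfl⟩
    exact delta_mul_gen_inv_mem_Bplus hi (by omega) le_rfl
  case gen =>
    rw [closure_gen_eq_top]
    trivial

/-- Every `β ∈ B_n` admits a unique decomposition `β = Δ_n^{-t} β'` with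
`t ∈ ℕ`, `β' ∈ B⁺_n`, and `β'` not left divisible by `Δ_n` unless `t = 0`. -/
theorem garside_quotient_exists_unique (n : ℕ) (hn : 2 ≤ n) (β : B n) :
    ∃! p : ℕ × B n, p.2 ∈ Bplus n n ∧ β = (delta n n ^ p.1)⁻¹ * p.2 ∧
      (p.1 ≠ 0 → ¬ LDiv n (delta n n) p.2) :=
  garside_quotient_exists_unique_general n β

end Braid
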